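/- arXiv:2010.15764 — 4 statements merged into one kernel-verified Lean document; each statement's English description precedes it below -/
import Mathlib

section
/- Let Σ be a symmetric positive definite d×d real matrix, b ∈ ℝ^d, σ > 0, and let Q be a d×k real matrix with linearly independent columns (k ≤ d). Then the minimum of (1 - ζᵀQᵀb)²·σ² + ζᵀ(QᵀΣQ)ζ over ζ ∈ ℝ^k equals σ² / (1 + σ²·bᵀ·Q·(QᵀΣQ)⁻¹·Qᵀ·b). -/
/-!
With `s = σ²`, `M = QᵀΣQ ≻ 0` and `c = Qᵀb`, the objective `f ζ = s (1 - ζ ⬝ c)² + ζᵀ M ζ` is a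
quadratic with Hessian `M + s c cᵀ ⪰ 0`. Writing `u = cᵀ M⁻¹ c`, the point
`ζ* = s / (1 + s u) • M⁻¹ c` is a critical point: `M ζ* = s (1 - ζ* ⬝ c) c`. Expanding around it gives
`f (ζ* + h) = f ζ* + hᵀ M h + s (h ⬝ c)² ≥ f ζ*`, and `f ζ* = s / (1 + s u)`.
-/

open Matrix

namespace Matrix

variable {n : Type*} [Fintype n]

lemma IsSymm.dotProduct_mulVec_comm {M : Matrix n n ℝ} (hM : M.IsSymm) (v w : n → ℝ) :
    v ⬝ᵥ M *ᵥ w = w ⬝ᵥ M *ᵥ v := by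
  conv_lhs => rw [← hM.eq]
  exact dotProduct_transpose_mulVec M v w

lemma sq_one_sub_dotProduct_add_quadForm_add {M : Matrix n n ℝ} (hM : M.IsSymm)
    {c z : n → ℝ} {s : ℝ} (hz : M *ᵥ z = (s * (1 - z ⬝ᵥ c)) • c) (h : n → ℝ) :
    (1 - (z + h) ⬝ᵥ c) ^ 2 * s + (z + h) ⬝ᵥ M *ᵥ (z + h) =
      ((1 - z ⬝ᵥ c) ^ 2 * s + z ⬝ᵥ M *ᵥ z) + (h ⬝ᵥ M *ᵥ h + s * (h ⬝ᵥ c) ^ 2) := by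
  have hcross : h ⬝ᵥ M *ᵥ z = s * (1 - z ⬝ᵥ c) * (h ⬝ᵥ c) := by
    rw [hz, dotProduct_smul, smul_eq_mul]
  simp only [add_dotProduct, mulVec_add, dotProduct_add, hM.dotProduct_mulVec_comm z h, hcross]
  ring

lemma isLeast_sq_one_sub_dotProduct_add_quadForm [DecidableEq n] {M : Matrix n n ℝ}
    (hM : M.PosDef) (c : n → ℝ) {s : ℝ} (hs : 0 ≤ s) :
    IsLeast (Set.range fun ζ : n → ℝ => (1 - ζ ⬝ᵥ c) ^ 2 * s + ζ ⬝ᵥ M *ᵥ ζ)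
      (s / (1 + s * (c ⬝ᵥ M⁻¹ *ᵥ c))) := by
  have hMsymm : M.IsSymm := isHermitian_iff_isSymm.mp hM.isHermitian
  set x := M⁻¹ *ᵥ c
  set u := c ⬝ᵥ x
  have hMx : M *ᵥ x = c := by
    rw [mulVec_mulVec, mul_nonsing_inv M hM.det_pos.ne'.isUnit, one_mulVec]
  have hu : 0 ≤ u := by simpa using hM.inv.posSemidef.dotProduct_mulVec_nonneg c
  have hD : 0 < 1 + s * u := by positivity
  set t := s / (1 + s * u)
  have hzc : (t • x) ⬝ᵥ c = t * u := by rw [smul_dotProduct, dotProduct_comm, smul_eq_mul]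
  have hone_sub : 1 - t * u = 1 / (1 + s * u) := by
    simp only [t]
    field_simp
    ring
  have hcrit : M *ᵥ (t • x) = (s * (1 - (t • x) ⬝ᵥ c)) • c := by
    rw [mulVec_smul, hMx, hzc, hone_sub]
    congr 1
    simp only [t]
    field_simp
  have hvalue : (1 - (t • x) ⬝ᵥ c) ^ 2 * s + (t • x) ⬝ᵥ M *ᵥ (t • x) = t := by
    rw [hzc, hone_sub, mulVec_smul, hMx, dotProduct_smul, smul_dotProduct, dotProduct_comm x c]
    simp only [smul_eq_mul, t]
    field_simp
    ring
  refine ⟨⟨t • x, hvalue⟩, ?_⟩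
  rintro _ ⟨ζ, rfl⟩
  dsimp only
  have hexpand := sq_one_sub_dotProduct_add_quadForm_add hMsymm hcrit (ζ - t • x)
  rw [add_sub_cancel, hvalue] at hexpand
  rw [hexpand, le_add_iff_nonneg_right]
  have hquad : 0 ≤ (ζ - t • x) ⬝ᵥ M *ᵥ (ζ - t • x) := by
    simpa using hM.posSemidef.dotProduct_mulVec_nonneg (ζ - t • x)
  positivity

end Matrix

theorem stmt2_general {d k : ℕ} (S : Matrix (Fin d) (Fin d) ℝ) (hS : S.PosDef)
    (b : Fin d → ℝ) (σ : ℝ)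
    (Q : Matrix (Fin d) (Fin k) ℝ) (hQ : LinearIndependent ℝ Qᵀ) :
    IsLeast
      (Set.range (fun ζ : Fin k → ℝ =>
        (1 - ζ ⬝ᵥ Qᵀ.mulVec b) ^ 2 * σ ^ 2 + ζ ⬝ᵥ (Qᵀ * S * Q).mulVec ζ))
      (σ ^ 2 /
        (1 + σ ^ 2 * (b ⬝ᵥ Q.mulVec ((Qᵀ * S * Q)⁻¹.mulVec (Qᵀ.mulVec b))))) := by
  have hM : (Qᵀ * S * Q).PosDef := by
    simpa [conjTranspose_eq_transpose_of_trivial] using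
      hS.conjTranspose_mul_mul_same (mulVec_injective_iff.mpr hQ)
  rw [dotProduct_mulVec, ← mulVec_transpose]
  exact isLeast_sq_one_sub_dotProduct_add_quadForm hM (Qᵀ *ᵥ b) (sq_nonneg σ)

/-- Value of the reparametrized DIP quadratic program. -/
theorem stmt2 {d k : ℕ} (hk : k ≤ d) (S : Matrix (Fin d) (Fin d) ℝ) (hS : S.PosDef)
    (hsymm : S.IsSymm) (b : Fin d → ℝ) (σ : ℝ) (hσ : 0 < σ)
    (Q : Matrix (Fin d) (Fin k) ℝ) (hQ : LinearIndependent ℝ Qᵀ) :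
    IsLeast
      (Set.range (fun ζ : Fin k → ℝ =>
        (1 - ζ ⬝ᵥ Qᵀ.mulVec b) ^ 2 * σ ^ 2 + ζ ⬝ᵥ (Qᵀ * S * Q).mulVec ζ))
      (σ ^ 2 /
        (1 + σ ^ 2 * (b ⬝ᵥ Q.mulVec ((Qᵀ * S * Q)⁻¹.mulVec (Qᵀ.mulVec b))))) :=
  stmt2_general S hS b σ Q hQ
end

section
/- Let Σ be a symmetric positive definite d×d matrix, b ∈ ℝ^d, σ > 0, u ∈ ℝ^d a unit vector, and Q a d×(d−1) matrix whose columns together with u form an orthonormal basis of ℝ^d. Then the minimum of (1 - γᵀb)²·σ² + γᵀΣγ subject to γᵀu = 0 equals σ² / (1 + σ²·bᵀΣ^{-1/2}·G·Σ^{-1/2}·b), where G = Σ^{1/2}Q(QᵀΣQ)⁻¹QᵀΣ^{1/2}. -/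
/-!
Since `Q` has orthonormal columns orthogonal to the unit vector `u`, `Q Qᵀ + u uᵀ = 1`, so
`ζ ↦ Q ζ` maps `ℝ^{d-1}` onto the hyperplane `γ ⬝ u = 0`. Substituting `γ = Q ζ` turns the
constrained problem into the unconstrained minimisation of `(1 - ζ ⬝ c)² τ + ζᵀ A ζ` with
`A = Qᵀ Σ Q` positive definite, `c = Qᵀ b` and `τ = σ²`. Completing the square around
`k A⁻¹ c`, where `k (1 + τ cᵀ A⁻¹ c) = τ`, shows the minimum is `k`. Finally the square roots
`Σ^{±1/2}` cancel, leaving `bᵀ Q A⁻¹ Qᵀ b = cᵀ A⁻¹ c`.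
-/

open Matrix

section

open scoped ComplexOrder

/-- The positive semidefinite square root of a positive semidefinite matrix
(the definition `Matrix.PosSemidef.sqrt` of the older Mathlib, removed since). -/
noncomputable def Matrix.PosSemidef.sqrt {n 𝕜 : Type*} [Fintype n] [RCLike 𝕜] [DecidableEq n]
    {A : Matrix n n 𝕜} (hA : A.PosSemidef) : Matrix n n 𝕜 :=
  hA.1.eigenvectorUnitary.1 * diagonal ((↑) ∘ (√·) ∘ hA.1.eigenvalues) *
  (star hA.1.eigenvectorUnitary : Matrix n n 𝕜)

end

namespace Matrix

open scoped ComplexOrder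

section Sqrt

variable {n 𝕜 : Type*} [Fintype n] [RCLike 𝕜] [DecidableEq n]

theorem PosSemidef.sqrt_mul_self {A : Matrix n n 𝕜} (hA : A.PosSemidef) :
    hA.sqrt * hA.sqrt = A := by
  set U : Matrix n n 𝕜 := hA.1.eigenvectorUnitary.1
  have hUU : star U * U = 1 := Unitary.coe_star_mul_self _
  have hdiag : diagonal ((↑) ∘ (√·) ∘ hA.1.eigenvalues) *
      diagonal ((↑) ∘ (√·) ∘ hA.1.eigenvalues) =
      diagonal (RCLike.ofReal ∘ hA.1.eigenvalues : n → 𝕜) := by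
    rw [diagonal_mul_diagonal]
    congr 1
    ext i
    simp [← RCLike.ofReal_mul, Real.mul_self_sqrt (hA.eigenvalues_nonneg i)]
  conv_rhs => rw [hA.1.spectral_theorem, Unitary.conjStarAlgAut_apply, ← hdiag]
  calc hA.sqrt * hA.sqrt = U * diagonal ((↑) ∘ (√·) ∘ hA.1.eigenvalues) * (star U * U) *
      diagonal ((↑) ∘ (√·) ∘ hA.1.eigenvalues) * star U := by
        simp only [PosSemidef.sqrt, U, Matrix.mul_assoc]
    _ = _ := by rw [hUU, Matrix.mul_one]; simp only [U, Matrix.mul_assoc]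

theorem PosDef.isUnit_det_sqrt {A : Matrix n n 𝕜} (hA : A.PosDef) :
    IsUnit hA.posSemidef.sqrt.det := by
  have : IsUnit (hA.posSemidef.sqrt * hA.posSemidef.sqrt).det := by
    rw [hA.posSemidef.sqrt_mul_self, ← isUnit_iff_isUnit_det]; exact hA.isUnit
  rw [det_mul] at this
  exact isUnit_of_mul_isUnit_left this

end Sqrt

theorem nonsing_inv_mul_mul_mul_nonsing_inv {n R : Type*} [Fintype n] [DecidableEq n] [CommRing R]
    {A : Matrix n n R} (hA : IsUnit A.det) (M : Matrix n n R) :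
    A⁻¹ * (A * M * A) * A⁻¹ = M := by
  simp only [← Matrix.mul_assoc, nonsing_inv_mul A hA, Matrix.one_mul]
  rw [Matrix.mul_assoc, mul_nonsing_inv A hA, Matrix.mul_one]

theorem dotProduct_mul_mul_mulVec {k l m n R : Type*} [Fintype k] [Fintype l] [Fintype m]
    [Fintype n] [CommSemiring R] (x : l → R) (B : Matrix l m R) (M : Matrix m n R)
    (C : Matrix n k R) (y : k → R) :
    x ⬝ᵥ (B * M * C) *ᵥ y = (Bᵀ *ᵥ x) ⬝ᵥ M *ᵥ (C *ᵥ y) := by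
  rw [← mulVec_mulVec, ← mulVec_mulVec, dotProduct_mulVec, mulVec_transpose, dotProduct_mulVec]

section Hyperplane

variable {m n R : Type*} [Fintype m] [Fintype n] [DecidableEq m] [DecidableEq n] [CommRing R]

theorem mul_transpose_add_vecMulVec_eq_one (hcard : Fintype.card m = Fintype.card n + 1)
    {Q : Matrix m n R} {u : m → R} (hQ : Qᵀ * Q = 1) (hQu : Qᵀ *ᵥ u = 0) (hu : u ⬝ᵥ u = 1) :
    Q * Qᵀ + vecMulVec u u = 1 := by
  have e : m ≃ n ⊕ Unit := Fintype.equivOfCardEq (by simpa using hcard)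
  have hQu' : replicateRow Unit u * Q = 0 := by
    rw [← replicateRow_vecMul, ← mulVec_transpose, hQu, replicateRow_zero]
  have horth : fromRows Qᵀ (replicateRow Unit u) * fromCols Q (replicateCol Unit u) = 1 := by
    rw [fromRows_mul_fromCols, hQ, ← replicateCol_mulVec, hQu, replicateCol_zero, hQu',
      replicateRow_mul_replicateCol, hu, ← fromBlocks_one]
    congr
  rw [vecMulVec_eq Unit, ← fromCols_mul_fromRows]
  exact (fromCols_mul_fromRows_eq_one_comm e _ _ _ _).mpr horth

theorem range_mulVec_eq_setOf_dotProduct_eq_zero (hcard : Fintype.card m = Fintype.card n + 1)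
    {Q : Matrix m n R} {u : m → R} (hQ : Qᵀ * Q = 1) (hQu : Qᵀ *ᵥ u = 0) (hu : u ⬝ᵥ u = 1) :
    Set.range Q.mulVec = {γ | γ ⬝ᵥ u = 0} := by
  ext γ
  constructor
  · rintro ⟨ζ, rfl⟩
    rw [Set.mem_ofPred_eq, dotProduct_comm, dotProduct_mulVec, ← mulVec_transpose, hQu,
      zero_dotProduct]
  · intro hγ
    refine ⟨Qᵀ *ᵥ γ, ?_⟩
    have h := congrArg (· *ᵥ γ) (mul_transpose_add_vecMulVec_eq_one hcard hQ hQu hu)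
    rw [add_mulVec, vecMulVec_mulVec, dotProduct_comm, hγ, MulOpposite.op_zero, zero_smul,
      add_zero, one_mulVec, ← mulVec_mulVec] at h
    exact h

theorem exists_dotProduct_eq_zero_and_iff (hcard : Fintype.card m = Fintype.card n + 1)
    {Q : Matrix m n R} {u : m → R} (hQ : Qᵀ * Q = 1) (hQu : Qᵀ *ᵥ u = 0) (hu : u ⬝ᵥ u = 1)
    {P : (m → R) → Prop} : (∃ γ, γ ⬝ᵥ u = 0 ∧ P γ) ↔ ∃ ζ, P (Q *ᵥ ζ) := by
  have hrange := range_mulVec_eq_setOf_dotProduct_eq_zero hcard hQ hQu hu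
  constructor
  · rintro ⟨γ, hγ, hP⟩
    obtain ⟨ζ, rfl⟩ := hrange.superset hγ
    exact ⟨ζ, hP⟩
  · rintro ⟨ζ, hP⟩
    exact ⟨Q *ᵥ ζ, hrange.subset ⟨ζ, rfl⟩, hP⟩

end Hyperplane

section Quadratic

variable {n : Type*} [Fintype n]

theorem sq_one_sub_dotProduct_mul_add_dotProduct_mulVec_eq {R : Type*} [CommRing R]
    {A : Matrix n n R} (hsymm : A.IsSymm) {c w : n → R} (hw : A *ᵥ w = c) (ζ : n → R)
    {τ k : R} (hk : k * (1 + τ * (c ⬝ᵥ w)) = τ) :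
    (1 - ζ ⬝ᵥ c) ^ 2 * τ + ζ ⬝ᵥ A *ᵥ ζ =
      k + (ζ - k • w) ⬝ᵥ A *ᵥ (ζ - k • w) + τ * ((ζ - k • w) ⬝ᵥ c) ^ 2 := by
  have hwA : w ⬝ᵥ A *ᵥ ζ = ζ ⬝ᵥ c := by
    rw [dotProduct_mulVec, ← mulVec_transpose, hsymm.eq, hw, dotProduct_comm]
  simp only [mulVec_sub, mulVec_smul, hw, sub_dotProduct, dotProduct_sub, smul_dotProduct,
    dotProduct_smul, smul_eq_mul, hwA]
  rw [dotProduct_comm w c]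
  linear_combination (2 * ζ ⬝ᵥ c - k * c ⬝ᵥ w - 1) * hk

theorem PosDef.isLeast_sq_one_sub_dotProduct_mul_add_dotProduct_mulVec [DecidableEq n]
    {A : Matrix n n ℝ} (hA : A.PosDef) (c : n → ℝ) {τ : ℝ} (hτ : 0 ≤ τ) :
    IsLeast {r | ∃ ζ, r = (1 - ζ ⬝ᵥ c) ^ 2 * τ + ζ ⬝ᵥ A *ᵥ ζ}
      (τ / (1 + τ * (c ⬝ᵥ A⁻¹ *ᵥ c))) := by
  have hsymm : A.IsSymm := by
    simpa only [IsSymm, conjTranspose_eq_transpose_of_trivial] using hA.isHermitian.eq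
  have hw : A *ᵥ (A⁻¹ *ᵥ c) = c := by
    rw [mulVec_mulVec, mul_nonsing_inv A ((isUnit_iff_isUnit_det A).mp hA.isUnit), one_mulVec]
  have ht : 0 ≤ c ⬝ᵥ A⁻¹ *ᵥ c := by
    simpa only [star_trivial] using hA.inv.posSemidef.dotProduct_mulVec_nonneg c
  set k := τ / (1 + τ * (c ⬝ᵥ A⁻¹ *ᵥ c))
  have hexpand := sq_one_sub_dotProduct_mul_add_dotProduct_mulVec_eq hsymm hw (k := k)
    (hk := div_mul_cancel₀ τ (by positivity))
  refine ⟨⟨k • A⁻¹ *ᵥ c, by rw [hexpand, sub_self]; simp⟩, ?_⟩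
  rintro r ⟨ζ, rfl⟩
  have hpos : 0 ≤ (ζ - k • A⁻¹ *ᵥ c) ⬝ᵥ A *ᵥ (ζ - k • A⁻¹ *ᵥ c) := by
    simpa only [star_trivial] using hA.posSemidef.dotProduct_mulVec_nonneg (ζ - k • A⁻¹ *ᵥ c)
  rw [hexpand ζ]
  have := mul_nonneg hτ (sq_nonneg ((ζ - k • A⁻¹ *ᵥ c) ⬝ᵥ c))
  linarith

end Quadratic

end Matrix

theorem stmt4_general {d : ℕ} (S : Matrix (Fin d) (Fin d) ℝ) (hS : S.PosDef)
    (b u : Fin d → ℝ) (σ : ℝ)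
    (hu : u ⬝ᵥ u = 1)
    (Q : Matrix (Fin d) (Fin (d - 1)) ℝ)
    (hQ : Qᵀ * Q = 1) (hQu : Qᵀ.mulVec u = 0) :
    IsLeast
      {r : ℝ | ∃ γ : Fin d → ℝ, γ ⬝ᵥ u = 0 ∧
        r = (1 - γ ⬝ᵥ b) ^ 2 * σ ^ 2 + γ ⬝ᵥ S.mulVec γ}
      (σ ^ 2 / (1 + σ ^ 2 *
        (b ⬝ᵥ ((hS.posSemidef.sqrt)⁻¹ *
            (hS.posSemidef.sqrt * Q * (Qᵀ * S * Q)⁻¹ * Qᵀ * hS.posSemidef.sqrt) *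
            (hS.posSemidef.sqrt)⁻¹).mulVec b))) := by
  have hd : d ≠ 0 := by
    rintro rfl
    simp at hu
  set A := Qᵀ * S * Q
  have hA : A.PosDef := by
    simpa only [conjTranspose_eq_transpose_of_trivial] using
      hS.conjTranspose_mul_mul_same (B := Q) fun x y h => by
        simpa [mulVec_mulVec, hQ] using congrArg (Qᵀ *ᵥ ·) h
  have hreduce (ζ : Fin (d - 1) → ℝ) :
      (1 - Q *ᵥ ζ ⬝ᵥ b) ^ 2 * σ ^ 2 + Q *ᵥ ζ ⬝ᵥ S *ᵥ Q *ᵥ ζ =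
        (1 - ζ ⬝ᵥ Qᵀ *ᵥ b) ^ 2 * σ ^ 2 + ζ ⬝ᵥ A *ᵥ ζ := by
    rw [dotProduct_mul_mul_mulVec, transpose_transpose, dotProduct_comm, dotProduct_mulVec,
      ← mulVec_transpose, dotProduct_comm]
  have hset : {r : ℝ | ∃ γ : Fin d → ℝ, γ ⬝ᵥ u = 0 ∧
        r = (1 - γ ⬝ᵥ b) ^ 2 * σ ^ 2 + γ ⬝ᵥ S.mulVec γ} =
      {r | ∃ ζ, r = (1 - ζ ⬝ᵥ Qᵀ *ᵥ b) ^ 2 * σ ^ 2 + ζ ⬝ᵥ A *ᵥ ζ} := by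
    ext r
    exact (exists_dotProduct_eq_zero_and_iff (by simp only [Fintype.card_fin]; omega) hQ hQu
      hu).trans (exists_congr fun ζ => by rw [hreduce])
  set R := hS.posSemidef.sqrt
  have hvalue : b ⬝ᵥ (R⁻¹ * (R * Q * A⁻¹ * Qᵀ * R) * R⁻¹) *ᵥ b = Qᵀ *ᵥ b ⬝ᵥ A⁻¹ *ᵥ Qᵀ *ᵥ b := by
    rw [show R * Q * A⁻¹ * Qᵀ * R = R * (Q * A⁻¹ * Qᵀ) * R by simp only [Matrix.mul_assoc],
      nonsing_inv_mul_mul_mul_nonsing_inv hS.isUnit_det_sqrt, dotProduct_mul_mul_mulVec]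
  rw [hset, hvalue]
  exact hA.isLeast_sq_one_sub_dotProduct_mul_add_dotProduct_mulVec _ (sq_nonneg σ)

/-- Value of the DIP constrained quadratic program: minimum of
`(1 - γᵀb)²σ² + γᵀΣγ` subject to `γᵀu = 0`. -/
theorem stmt4 {d : ℕ} (hd : 1 ≤ d) (S : Matrix (Fin d) (Fin d) ℝ) (hS : S.PosDef)
    (hsymm : S.IsSymm) (b u : Fin d → ℝ) (σ : ℝ) (hσ : 0 < σ)
    (hu : u ⬝ᵥ u = 1)
    (Q : Matrix (Fin d) (Fin (d - 1)) ℝ)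
    (hQ : Qᵀ * Q = 1) (hQu : Qᵀ.mulVec u = 0) :
    IsLeast
      {r : ℝ | ∃ γ : Fin d → ℝ, γ ⬝ᵥ u = 0 ∧
        r = (1 - γ ⬝ᵥ b) ^ 2 * σ ^ 2 + γ ⬝ᵥ S.mulVec γ}
      (σ ^ 2 / (1 + σ ^ 2 *
        (b ⬝ᵥ ((hS.posSemidef.sqrt)⁻¹ *
            (hS.posSemidef.sqrt * Q * (Qᵀ * S * Q)⁻¹ * Qᵀ * hS.posSemidef.sqrt) *
            (hS.posSemidef.sqrt)⁻¹).mulVec b))) :=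
  stmt4_general S hS b u σ hu Q hQ hQu
end

section
/- Let Σ be a symmetric positive definite d×d matrix, b ∈ ℝ^d, σ > 0, and a₁, ã ∈ ℝ^d fixed intervention vectors. Consider real random variables Y = ε_Y and random vectors X = b·ε_Y + a + ε_X, where ε_Y has mean 0 and variance σ², ε_X has mean 0 and covariance Σ, ε_Y and ε_X are uncorrelated, and a equals a₁ in the source and ã in the target. Then for every β ∈ ℝ^d and β₀ ∈ ℝ: E[(Y − βᵀX − β₀)²] in the source equals (1 − βᵀb)²σ² + (βᵀa₁ + β₀)² + βᵀΣβ, and in the target equals (1 − βᵀb)²σ² + (βᵀã + β₀)² + βᵀΣβ. Consequently, if βᵀ(a₁ − ã) = 0 then the source and target risks of (β, β₀) are equal. -/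
/-!
The residual `Y - βᵀX - β₀` equals `(1 - βᵀb) ε_Y - βᵀε_X - (βᵀa + β₀)`: a multiple of `ε_Y`,
minus a centred noise uncorrelated with it, minus a constant. Expanding the square, every cross
term has mean zero, so the risk is the sum of the three second moments. The shift `a` enters only
through the constant `βᵀa + β₀`, which the matching constraint makes the same in source and target.
-/

open Matrix MeasureTheory

lemma dotProduct_anticausal {ι : Type*} [Fintype ι] (β b a x : ι → ℝ) (y : ℝ) :
    β ⬝ᵥ (fun i => b i * y + a i + x i) = (β ⬝ᵥ b) * y + β ⬝ᵥ a + β ⬝ᵥ x := by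
  have : (fun i => b i * y + a i + x i) = y • b + a + x := by
    funext i; simp [mul_comm]
  rw [this, dotProduct_add, dotProduct_add, dotProduct_smul, smul_eq_mul, mul_comm]

section SecondMoments

variable {Ω : Type*} [MeasurableSpace Ω] {μ : Measure Ω}

lemma integral_sq_sub_sub_const_of_uncorrelated [IsProbabilityMeasure μ] {U V : Ω → ℝ}
    (hU : Integrable U μ) (hU2 : Integrable (fun ω => U ω ^ 2) μ)
    (hV : Integrable V μ) (hV2 : Integrable (fun ω => V ω ^ 2) μ)
    (hUV : Integrable (fun ω => U ω * V ω) μ)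
    (hmU : ∫ ω, U ω ∂μ = 0) (hmV : ∫ ω, V ω ∂μ = 0) (hcUV : ∫ ω, U ω * V ω ∂μ = 0)
    (c k : ℝ) :
    ∫ ω, (c * U ω - V ω - k) ^ 2 ∂μ = c ^ 2 * ∫ ω, U ω ^ 2 ∂μ + k ^ 2 + ∫ ω, V ω ^ 2 ∂μ := by
  have hexpand : (fun ω => (c * U ω - V ω - k) ^ 2) = fun ω =>
      c ^ 2 * U ω ^ 2 + V ω ^ 2 - 2 * c * (U ω * V ω) - 2 * c * k * U ω + 2 * k * V ω + k ^ 2 := by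
    funext ω; ring
  rw [hexpand, integral_add, integral_add, integral_sub, integral_sub, integral_add]
  · simp only [integral_const_mul, hmU, hmV, hcUV, integral_const, probReal_univ, smul_eq_mul,
      one_mul]
    ring
  all_goals fun_prop

variable {ι : Type*} [Fintype ι]

lemma integrable_dotProduct (β : ι → ℝ) {X : ι → Ω → ℝ} (hX : ∀ i, Integrable (X i) μ) :
    Integrable (fun ω => β ⬝ᵥ fun i => X i ω) μ :=
  integrable_finsetSum _ fun i _ => (hX i).const_mul (β i)

lemma integral_dotProduct (β : ι → ℝ) {X : ι → Ω → ℝ} (hX : ∀ i, Integrable (X i) μ) :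
    ∫ ω, (β ⬝ᵥ fun i => X i ω) ∂μ = β ⬝ᵥ fun i => ∫ ω, X i ω ∂μ := by
  simp only [dotProduct]
  rw [integral_finsetSum _ fun i _ => (hX i).const_mul (β i)]
  simp only [integral_const_mul]

lemma mul_dotProduct_eq (β : ι → ℝ) (y : ℝ) (x : ι → ℝ) :
    y * (β ⬝ᵥ x) = β ⬝ᵥ fun i => y * x i :=
  (dotProduct_smul y β x).symm

lemma integrable_mul_dotProduct (β : ι → ℝ) {Y : Ω → ℝ} {X : ι → Ω → ℝ}
    (hYX : ∀ i, Integrable (fun ω => Y ω * X i ω) μ) :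
    Integrable (fun ω => Y ω * (β ⬝ᵥ fun i => X i ω)) μ := by
  simpa only [mul_dotProduct_eq] using integrable_dotProduct β hYX

lemma integral_mul_dotProduct (β : ι → ℝ) {Y : Ω → ℝ} {X : ι → Ω → ℝ}
    (hYX : ∀ i, Integrable (fun ω => Y ω * X i ω) μ) :
    ∫ ω, Y ω * (β ⬝ᵥ fun i => X i ω) ∂μ = β ⬝ᵥ fun i => ∫ ω, Y ω * X i ω ∂μ := by
  simpa only [mul_dotProduct_eq] using integral_dotProduct β hYX

lemma integrable_dotProduct_mul (β : ι → ℝ) {X : ι → Ω → ℝ}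
    (hX2 : ∀ i j, Integrable (fun ω => X i ω * X j ω) μ) (i : ι) :
    Integrable (fun ω => (β ⬝ᵥ fun j => X j ω) * X i ω) μ := by
  simpa only [mul_comm _ (X i _)] using integrable_mul_dotProduct β (hX2 i)

lemma integrable_dotProduct_sq (β : ι → ℝ) {X : ι → Ω → ℝ}
    (hX2 : ∀ i j, Integrable (fun ω => X i ω * X j ω) μ) :
    Integrable (fun ω => (β ⬝ᵥ fun i => X i ω) ^ 2) μ := by
  simpa only [sq] using integrable_mul_dotProduct β (integrable_dotProduct_mul β hX2)

lemma integral_dotProduct_sq (β : ι → ℝ) {X : ι → Ω → ℝ} {C : Matrix ι ι ℝ}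
    (hX2 : ∀ i j, Integrable (fun ω => X i ω * X j ω) μ)
    (hC : ∀ i j, ∫ ω, X i ω * X j ω ∂μ = C i j) :
    ∫ ω, (β ⬝ᵥ fun i => X i ω) ^ 2 ∂μ = β ⬝ᵥ C *ᵥ β := by
  have hrow (i : ι) : ∫ ω, (β ⬝ᵥ fun j => X j ω) * X i ω ∂μ = (C *ᵥ β) i := by
    simp only [mul_comm _ (X i _)]
    rw [integral_mul_dotProduct β (hX2 i), mulVec, dotProduct_comm]
    simp only [hC]
  simp only [sq]
  rw [integral_mul_dotProduct β (integrable_dotProduct_mul β hX2)]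
  simp only [hrow]

lemma integral_anticausal_risk [IsProbabilityMeasure μ] (S : Matrix ι ι ℝ) (b a : ι → ℝ) (σ : ℝ)
    (εY : Ω → ℝ) (εX : ι → Ω → ℝ)
    (hY1 : Integrable εY μ) (hY2 : Integrable (fun ω => εY ω ^ 2) μ)
    (hX1 : ∀ i, Integrable (εX i) μ)
    (hX2 : ∀ i j, Integrable (fun ω => εX i ω * εX j ω) μ)
    (hYX : ∀ i, Integrable (fun ω => εY ω * εX i ω) μ)
    (hmY : ∫ ω, εY ω ∂μ = 0) (hvY : ∫ ω, εY ω ^ 2 ∂μ = σ ^ 2)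
    (hmX : ∀ i, ∫ ω, εX i ω ∂μ = 0)
    (hcX : ∀ i j, ∫ ω, εX i ω * εX j ω ∂μ = S i j)
    (hYXc : ∀ i, ∫ ω, εY ω * εX i ω ∂μ = 0)
    (β : ι → ℝ) (β0 : ℝ) :
    ∫ ω, (εY ω - β ⬝ᵥ (fun i => b i * εY ω + a i + εX i ω) - β0) ^ 2 ∂μ
        = (1 - β ⬝ᵥ b) ^ 2 * σ ^ 2 + (β ⬝ᵥ a + β0) ^ 2 + β ⬝ᵥ S *ᵥ β := by
  have hresidual (ω : Ω) : εY ω - β ⬝ᵥ (fun i => b i * εY ω + a i + εX i ω) - β0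
      = (1 - β ⬝ᵥ b) * εY ω - (β ⬝ᵥ fun i => εX i ω) - (β ⬝ᵥ a + β0) := by
    rw [dotProduct_anticausal]; ring
  have hmZ : ∫ ω, (β ⬝ᵥ fun i => εX i ω) ∂μ = 0 := by
    simp [integral_dotProduct β hX1, hmX]
  have hcYZ : ∫ ω, εY ω * (β ⬝ᵥ fun i => εX i ω) ∂μ = 0 := by
    simp [integral_mul_dotProduct β hYX, hYXc]
  simp only [hresidual]
  rw [integral_sq_sub_sub_const_of_uncorrelated hY1 hY2 (integrable_dotProduct β hX1)
    (integrable_dotProduct_sq β hX2) (integrable_mul_dotProduct β hYX) hmY hmZ hcYZ,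
    hvY, integral_dotProduct_sq β hX2 hcX]

end SecondMoments

theorem stmt13_general {Ω : Type*} [MeasurableSpace Ω] (μ : Measure Ω) [IsProbabilityMeasure μ]
    {d : ℕ} (S : Matrix (Fin d) (Fin d) ℝ)
    (b a1 atil : Fin d → ℝ) (σ : ℝ)
    (εY : Ω → ℝ) (εX : Fin d → Ω → ℝ)
    (hY1 : Integrable εY μ) (hY2 : Integrable (fun ω => εY ω ^ 2) μ)
    (hX1 : ∀ i, Integrable (εX i) μ)
    (hX2 : ∀ i j, Integrable (fun ω => εX i ω * εX j ω) μ)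
    (hYX : ∀ i, Integrable (fun ω => εY ω * εX i ω) μ)
    (hmY : ∫ ω, εY ω ∂μ = 0) (hvY : ∫ ω, εY ω ^ 2 ∂μ = σ ^ 2)
    (hmX : ∀ i, ∫ ω, εX i ω ∂μ = 0)
    (hcX : ∀ i j, ∫ ω, εX i ω * εX j ω ∂μ = S i j)
    (hYXc : ∀ i, ∫ ω, εY ω * εX i ω ∂μ = 0)
    (β : Fin d → ℝ) (β0 : ℝ) :
    (∫ ω, (εY ω - β ⬝ᵥ (fun i => b i * εY ω + a1 i + εX i ω) - β0) ^ 2 ∂μ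
        = (1 - β ⬝ᵥ b) ^ 2 * σ ^ 2 + (β ⬝ᵥ a1 + β0) ^ 2 + β ⬝ᵥ S.mulVec β) ∧
    (∫ ω, (εY ω - β ⬝ᵥ (fun i => b i * εY ω + atil i + εX i ω) - β0) ^ 2 ∂μ
        = (1 - β ⬝ᵥ b) ^ 2 * σ ^ 2 + (β ⬝ᵥ atil + β0) ^ 2 + β ⬝ᵥ S.mulVec β) ∧
    (β ⬝ᵥ (a1 - atil) = 0 →
      ∫ ω, (εY ω - β ⬝ᵥ (fun i => b i * εY ω + a1 i + εX i ω) - β0) ^ 2 ∂μ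
        = ∫ ω, (εY ω - β ⬝ᵥ (fun i => b i * εY ω + atil i + εX i ω) - β0) ^ 2 ∂μ) := by
  have hsource := integral_anticausal_risk S b a1 σ εY εX hY1 hY2 hX1 hX2 hYX hmY hvY hmX
    hcX hYXc β β0
  have htarget := integral_anticausal_risk S b atil σ εY εX hY1 hY2 hX1 hX2 hYX hmY hvY hmX
    hcX hYXc β β0
  refine ⟨hsource, htarget, fun hmatch => ?_⟩
  rw [hsource, htarget, sub_eq_zero.mp ((dotProduct_sub β a1 atil).symm.trans hmatch)]

/-- Source and target population risks in the reduced anticausal model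
`Y = ε_Y`, `X = bY + a + ε_X`, and their equality under the DIP matching
constraint `βᵀ(a₁ − ã) = 0`. -/
theorem stmt13 {Ω : Type*} [MeasurableSpace Ω] (μ : Measure Ω) [IsProbabilityMeasure μ]
    {d : ℕ} (S : Matrix (Fin d) (Fin d) ℝ) (hS : S.PosDef)
    (b a1 atil : Fin d → ℝ) (σ : ℝ) (hσ : 0 < σ)
    (εY : Ω → ℝ) (εX : Fin d → Ω → ℝ)
    (hY1 : Integrable εY μ) (hY2 : Integrable (fun ω => εY ω ^ 2) μ)
    (hX1 : ∀ i, Integrable (εX i) μ)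
    (hX2 : ∀ i j, Integrable (fun ω => εX i ω * εX j ω) μ)
    (hYX : ∀ i, Integrable (fun ω => εY ω * εX i ω) μ)
    (hmY : ∫ ω, εY ω ∂μ = 0) (hvY : ∫ ω, εY ω ^ 2 ∂μ = σ ^ 2)
    (hmX : ∀ i, ∫ ω, εX i ω ∂μ = 0)
    (hcX : ∀ i j, ∫ ω, εX i ω * εX j ω ∂μ = S i j)
    (hYXc : ∀ i, ∫ ω, εY ω * εX i ω ∂μ = 0)
    (β : Fin d → ℝ) (β0 : ℝ) :
    (∫ ω, (εY ω - β ⬝ᵥ (fun i => b i * εY ω + a1 i + εX i ω) - β0) ^ 2 ∂μ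
        = (1 - β ⬝ᵥ b) ^ 2 * σ ^ 2 + (β ⬝ᵥ a1 + β0) ^ 2 + β ⬝ᵥ S.mulVec β) ∧
    (∫ ω, (εY ω - β ⬝ᵥ (fun i => b i * εY ω + atil i + εX i ω) - β0) ^ 2 ∂μ
        = (1 - β ⬝ᵥ b) ^ 2 * σ ^ 2 + (β ⬝ᵥ atil + β0) ^ 2 + β ⬝ᵥ S.mulVec β) ∧
    (β ⬝ᵥ (a1 - atil) = 0 →
      ∫ ω, (εY ω - β ⬝ᵥ (fun i => b i * εY ω + a1 i + εX i ω) - β0) ^ 2 ∂μ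
        = ∫ ω, (εY ω - β ⬝ᵥ (fun i => b i * εY ω + atil i + εX i ω) - β0) ^ 2 ∂μ) :=
  stmt13_general μ S b a1 atil σ εY εX hY1 hY2 hX1 hX2 hYX hmY hvY hmX hcX hYXc β β0
end

section
/- Let Σ be a symmetric positive definite d×d matrix, b ∈ ℝ^d, σ > 0, Δ ≥ 0, and Q ∈ ℝ^{d×k} with linearly independent columns. Then the minimum over γ ∈ ℝ^d with γ in the column space of Q of (1 − γᵀb)²·(σ² + Δ) + γᵀΣγ equals (σ² + Δ) / (1 + (σ² + Δ)·bᵀQ(QᵀΣQ)⁻¹Qᵀb), attained at γ* = (σ² + Δ)·Q(QᵀΣQ)⁻¹Qᵀb / (1 + (σ² + Δ)·bᵀQ(QᵀΣQ)⁻¹Qᵀb). -/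
/-!
Writing `γ = Q ζ` turns the problem into the unconstrained minimisation of
`(1 - ζᵀc)² s + ζᵀTζ` with `c = Qᵀb`, `T = QᵀΣQ` positive definite and `s = σ² + Δ`.
With `β = cᵀT⁻¹c` and `m = s / (1 + sβ)`, completing the square gives
`(1 - ζᵀc)² s + ζᵀTζ = m + wᵀTw + s (ζᵀc - mβ)²` for `w = ζ - m T⁻¹c`,
so the value is at least `m`, with equality at `ζ = m T⁻¹c`.
-/

open Matrix

namespace CIP

variable {ι : Type*} [Fintype ι]

def objective (s : ℝ) (c : ι → ℝ) (T : Matrix ι ι ℝ) (ζ : ι → ℝ) : ℝ :=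
  (1 - ζ ⬝ᵥ c) ^ 2 * s + ζ ⬝ᵥ T *ᵥ ζ

lemma objective_mulVec {κ : Type*} [Fintype κ] (s : ℝ) (b : ι → ℝ) (S : Matrix ι ι ℝ)
    (Q : Matrix ι κ ℝ) (ζ : κ → ℝ) :
    objective s b S (Q *ᵥ ζ) = objective s (Qᵀ *ᵥ b) (Qᵀ * S * Q) ζ := by
  simp only [objective, dotProduct_mulVec ζ, vecMul_transpose, ← mulVec_mulVec,
    dotProduct_comm _ b, dotProduct_mulVec b]

variable [DecidableEq ι]

lemma objective_eq_add_sq {T : Matrix ι ι ℝ} (hT : T.IsSymm) (hTu : IsUnit T)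
    (s : ℝ) (c ζ : ι → ℝ) (hD : 1 + s * (c ⬝ᵥ T⁻¹ *ᵥ c) ≠ 0) :
    objective s c T ζ =
      s / (1 + s * (c ⬝ᵥ T⁻¹ *ᵥ c))
        + (ζ - (s / (1 + s * (c ⬝ᵥ T⁻¹ *ᵥ c))) • T⁻¹ *ᵥ c) ⬝ᵥ
            T *ᵥ (ζ - (s / (1 + s * (c ⬝ᵥ T⁻¹ *ᵥ c))) • T⁻¹ *ᵥ c)
        + s * (ζ ⬝ᵥ c - s / (1 + s * (c ⬝ᵥ T⁻¹ *ᵥ c)) * (c ⬝ᵥ T⁻¹ *ᵥ c)) ^ 2 := by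
  have hTinv : T *ᵥ (T⁻¹ *ᵥ c) = c := by
    rw [mulVec_mulVec, mul_nonsing_inv T ((isUnit_iff_isUnit_det T).mp hTu), one_mulVec]
  have hsymm (x y : ι → ℝ) : x ⬝ᵥ T *ᵥ y = y ⬝ᵥ T *ᵥ x := by
    rw [dotProduct_mulVec, ← mulVec_transpose, hT.eq, dotProduct_comm]
  simp only [objective, mulVec_sub, mulVec_smul, hTinv, sub_dotProduct, dotProduct_sub,
    smul_dotProduct, dotProduct_smul, smul_eq_mul, hsymm (T⁻¹ *ᵥ c) ζ]
  rw [dotProduct_comm (T⁻¹ *ᵥ c) c]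
  set β := c ⬝ᵥ T⁻¹ *ᵥ c
  set m := s / (1 + s * β)
  have hmβ : m * (1 + s * β) = s := div_mul_cancel₀ s hD
  clear_value m β
  linear_combination (2 * (ζ ⬝ᵥ c) - m * β - 1) * hmβ

variable {T : Matrix ι ι ℝ} {s : ℝ}

lemma one_add_mul_inv_quadForm_pos (hT : T.PosDef) (hs : 0 ≤ s) (c : ι → ℝ) :
    0 < 1 + s * (c ⬝ᵥ T⁻¹ *ᵥ c) := by
  have hβ := hT.inv.posSemidef.dotProduct_mulVec_nonneg c
  rw [star_trivial] at hβ
  positivity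

lemma le_objective (hT : T.PosDef) (hs : 0 ≤ s) (c ζ : ι → ℝ) :
    s / (1 + s * (c ⬝ᵥ T⁻¹ *ᵥ c)) ≤ objective s c T ζ := by
  rw [objective_eq_add_sq (isHermitian_iff_isSymm.mp hT.1) hT.isUnit s c ζ
    (one_add_mul_inv_quadForm_pos hT hs c).ne']
  have hw := hT.posSemidef.dotProduct_mulVec_nonneg
    (ζ - (s / (1 + s * (c ⬝ᵥ T⁻¹ *ᵥ c))) • T⁻¹ *ᵥ c)
  rw [star_trivial] at hw
  have hsq := mul_nonneg hs (sq_nonneg (ζ ⬝ᵥ c - s / (1 + s * (c ⬝ᵥ T⁻¹ *ᵥ c)) * (c ⬝ᵥ T⁻¹ *ᵥ c)))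
  linarith

lemma objective_smul_inv_mulVec (hT : T.PosDef) (hs : 0 ≤ s) (c : ι → ℝ) :
    objective s c T ((s / (1 + s * (c ⬝ᵥ T⁻¹ *ᵥ c))) • T⁻¹ *ᵥ c) =
      s / (1 + s * (c ⬝ᵥ T⁻¹ *ᵥ c)) := by
  rw [objective_eq_add_sq (isHermitian_iff_isSymm.mp hT.1) hT.isUnit s c _
    (one_add_mul_inv_quadForm_pos hT hs c).ne', sub_self, smul_dotProduct,
    dotProduct_comm (T⁻¹ *ᵥ c) c, smul_eq_mul]
  simp

end CIP

theorem stmt18_general {d k : ℕ} (S : Matrix (Fin d) (Fin d) ℝ) (hS : S.PosDef)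
    (b : Fin d → ℝ) (σ Δ : ℝ) (hΔ : 0 ≤ Δ)
    (Q : Matrix (Fin d) (Fin k) ℝ) (hQ : LinearIndependent ℝ Qᵀ) :
    IsLeast
      {r : ℝ | ∃ γ : Fin d → ℝ, (∃ ζ : Fin k → ℝ, γ = Q.mulVec ζ) ∧
        r = (1 - γ ⬝ᵥ b) ^ 2 * (σ ^ 2 + Δ) + γ ⬝ᵥ S.mulVec γ}
      ((σ ^ 2 + Δ) /
        (1 + (σ ^ 2 + Δ) * (b ⬝ᵥ Q.mulVec ((Qᵀ * S * Q)⁻¹.mulVec (Qᵀ.mulVec b))))) ∧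
    (1 - (((σ ^ 2 + Δ) /
            (1 + (σ ^ 2 + Δ) * (b ⬝ᵥ Q.mulVec ((Qᵀ * S * Q)⁻¹.mulVec (Qᵀ.mulVec b))))) •
          Q.mulVec ((Qᵀ * S * Q)⁻¹.mulVec (Qᵀ.mulVec b))) ⬝ᵥ b) ^ 2 * (σ ^ 2 + Δ)
      + (((σ ^ 2 + Δ) /
            (1 + (σ ^ 2 + Δ) * (b ⬝ᵥ Q.mulVec ((Qᵀ * S * Q)⁻¹.mulVec (Qᵀ.mulVec b))))) •
          Q.mulVec ((Qᵀ * S * Q)⁻¹.mulVec (Qᵀ.mulVec b))) ⬝ᵥ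
        S.mulVec (((σ ^ 2 + Δ) /
            (1 + (σ ^ 2 + Δ) * (b ⬝ᵥ Q.mulVec ((Qᵀ * S * Q)⁻¹.mulVec (Qᵀ.mulVec b))))) •
          Q.mulVec ((Qᵀ * S * Q)⁻¹.mulVec (Qᵀ.mulVec b)))
      = (σ ^ 2 + Δ) /
          (1 + (σ ^ 2 + Δ) * (b ⬝ᵥ Q.mulVec ((Qᵀ * S * Q)⁻¹.mulVec (Qᵀ.mulVec b)))) := by
  have hs : 0 ≤ σ ^ 2 + Δ := by positivity
  have hT : (Qᵀ * S * Q).PosDef := by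
    simpa only [conjTranspose_eq_transpose_of_trivial] using
      hS.conjTranspose_mul_mul_same (mulVec_injective_iff.mpr hQ)
  have hβ : b ⬝ᵥ Q *ᵥ ((Qᵀ * S * Q)⁻¹ *ᵥ Qᵀ *ᵥ b) =
      (Qᵀ *ᵥ b) ⬝ᵥ (Qᵀ * S * Q)⁻¹ *ᵥ Qᵀ *ᵥ b := by
    rw [dotProduct_mulVec, ← mulVec_transpose]
  have hmin := CIP.objective_smul_inv_mulVec hT hs (Qᵀ *ᵥ b)
  rw [← CIP.objective_mulVec, mulVec_smul] at hmin
  rw [hβ]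
  refine ⟨⟨⟨_, ⟨_, (mulVec_smul Q _ _).symm⟩, hmin.symm⟩, ?_⟩, hmin⟩
  rintro r ⟨_, ⟨ζ, rfl⟩, rfl⟩
  exact (CIP.le_objective hT hs _ ζ).trans_eq (CIP.objective_mulVec _ b S Q ζ).symm

/-- CIP constrained quadratic program: minimum over the column space of `Q` of
`(1 − γᵀb)²(σ² + Δ) + γᵀΣγ`. -/
theorem stmt18 {d k : ℕ} (S : Matrix (Fin d) (Fin d) ℝ) (hS : S.PosDef)
    (hsymm : S.IsSymm) (b : Fin d → ℝ) (σ Δ : ℝ) (hσ : 0 < σ) (hΔ : 0 ≤ Δ)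
    (Q : Matrix (Fin d) (Fin k) ℝ) (hQ : LinearIndependent ℝ Qᵀ) :
    IsLeast
      {r : ℝ | ∃ γ : Fin d → ℝ, (∃ ζ : Fin k → ℝ, γ = Q.mulVec ζ) ∧
        r = (1 - γ ⬝ᵥ b) ^ 2 * (σ ^ 2 + Δ) + γ ⬝ᵥ S.mulVec γ}
      ((σ ^ 2 + Δ) /
        (1 + (σ ^ 2 + Δ) * (b ⬝ᵥ Q.mulVec ((Qᵀ * S * Q)⁻¹.mulVec (Qᵀ.mulVec b))))) ∧
    (1 - (((σ ^ 2 + Δ) /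
            (1 + (σ ^ 2 + Δ) * (b ⬝ᵥ Q.mulVec ((Qᵀ * S * Q)⁻¹.mulVec (Qᵀ.mulVec b))))) •
          Q.mulVec ((Qᵀ * S * Q)⁻¹.mulVec (Qᵀ.mulVec b))) ⬝ᵥ b) ^ 2 * (σ ^ 2 + Δ)
      + (((σ ^ 2 + Δ) /
            (1 + (σ ^ 2 + Δ) * (b ⬝ᵥ Q.mulVec ((Qᵀ * S * Q)⁻¹.mulVec (Qᵀ.mulVec b))))) •
          Q.mulVec ((Qᵀ * S * Q)⁻¹.mulVec (Qᵀ.mulVec b))) ⬝ᵥ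
        S.mulVec (((σ ^ 2 + Δ) /
            (1 + (σ ^ 2 + Δ) * (b ⬝ᵥ Q.mulVec ((Qᵀ * S * Q)⁻¹.mulVec (Qᵀ.mulVec b))))) •
          Q.mulVec ((Qᵀ * S * Q)⁻¹.mulVec (Qᵀ.mulVec b)))
      = (σ ^ 2 + Δ) /
          (1 + (σ ^ 2 + Δ) * (b ⬝ᵥ Q.mulVec ((Qᵀ * S * Q)⁻¹.mulVec (Qᵀ.mulVec b)))) :=
  stmt18_general S hS b σ Δ hΔ Q hQ
end
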